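/- Let r ≥ 1, let δ be an integer, and set ρ̂ = (−δ/2, −δ/2 − 1, …, −δ/2 − (r−1)) ∈ ℚ^r ⊆ ℝ^r. Let λ, μ ∈ ℝ^r be weakly decreasing tuples. If μ + ρ̂ = w(λ + ρ̂) for some even signed permutation w (i.e., λ and μ are conjugate under the star action of W(D_r)), then (λ ∩ μ) + ρ̂ = w'(λ + ρ̂) for some even signed permutation w' (i.e., λ and λ ∩ μ are conjugate under the star action of W(D_r)). -/

import Mathlib

/-- `y` is obtained from `x` by an even signed permutation, i.e. `x` and `y` are
conjugate under the Weyl group `W(D_r) ⊆ W(C_r)` of signed permutations with an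
even number of sign changes (`∏ i, ε i = 1`). -/
def IsEvenSignedPermOf {r : ℕ} (x y : Fin r → ℝ) : Prop :=
  ∃ (σ : Equiv.Perm (Fin r)) (ε : Fin r → ℝ),
    (∀ i, ε i = 1 ∨ ε i = -1) ∧ (∏ i, ε i) = 1 ∧ ∀ i, y i = ε i * x (σ i)

/-!
A tuple `y` lies in the `W(D_r)`-orbit of `x` exactly when the multisets of absolute values
`|x i|` and `|y i|` agree and `∏ y i = ∏ x i` (a zero coordinate absorbs a superfluous sign
change). For antitone `x`, `y` and an upward closed predicate `p`, the indices with
`p (min (x i) (y i))` are the common initial segment of those for `x` and `y`, so their number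
is the minimum of the two counts. Since `|v| ≥ a` splits into `v ≥ a` and `v ≤ -a`, this
forces `min x y` to have the same absolute values as `x`, and its number of negative entries is
that of `x` or of `y`, so its product is `∏ x i` or `∏ y i = ∏ x i`. The shift by `ρ̂` keeps
`λ + ρ̂`, `μ + ρ̂` antitone and commutes with `min`.
-/

open Finset

section CardFilter

variable {ι α : Type*} [Fintype ι]

lemma exists_perm_apply_eq_of_map_univ_eq {f g : ι → α}
    (h : univ.val.map f = univ.val.map g) : ∃ σ : Equiv.Perm ι, ∀ i, f i = g (σ i) := by
  classical
  have hfiber (c : α) : Fintype.card {i // f i = c} = Fintype.card {i // g i = c} := by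
    simpa [Fintype.card_subtype, Multiset.count_map, ← filter_val, ← card_def, eq_comm] using
      congrArg (Multiset.count c) h
  exact ⟨Equiv.ofFiberEquiv fun c => Fintype.equivOfCardEq (hfiber c),
    fun i => (Equiv.ofFiberEquiv_map _ i).symm⟩

lemma map_univ_val_eq_iff_card_filter_eq [LinearOrder α] {f g : ι → α} :
    univ.val.map f = univ.val.map g ↔
      ∀ (p : α → Prop) [DecidablePred p], Monotone p → #{i | p (f i)} = #{i | p (g i)} := by
  classical
  have hcard (v : ι → α) (p : α → Prop) [DecidablePred p] :
      #{i | p (v i)} = (univ.val.map v).countP p := by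
    rw [Multiset.countP_map, card_def, filter_val]
  have hsplit (v : ι → α) (a : α) : #{i | a ≤ v i} = #{i | a = v i} + #{i | a < v i} := by
    rw [← card_union_of_disjoint (disjoint_filter.2 fun i _ h => h.not_lt), ← filter_or]
    simp only [le_iff_eq_or_lt]
  refine ⟨fun h p _ _ => by rw [hcard f, hcard g, h], fun h => Multiset.ext.2 fun a => ?_⟩
  have hle := h (a ≤ ·) fun _ _ hbc hab => hab.trans hbc
  have hlt := h (a < ·) fun _ _ hbc hab => hab.trans_le hbc
  simp only [Multiset.count_map, ← filter_val, ← card_def]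
  have := hsplit f a
  have := hsplit g a
  omega

variable [LinearOrder ι]

lemma card_filter_and_of_antitone {P Q : ι → Prop} [DecidablePred P] [DecidablePred Q]
    (hP : Antitone P) (hQ : Antitone Q) : #{i | P i ∧ Q i} = min #{i | P i} #{i | Q i} := by
  rw [filter_and]
  rcases (isLowerSet_setOfPred.2 hP).total (isLowerSet_setOfPred.2 hQ) with hPQ | hQP
  · have : univ.filter P ⊆ univ.filter Q := monotone_filter_right _ fun i _ => @hPQ i
    rw [inter_eq_left.2 this, min_eq_left (card_le_card this)]
  · have : univ.filter Q ⊆ univ.filter P := monotone_filter_right _ fun i _ => @hQP i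
    rw [inter_eq_right.2 this, min_eq_right (card_le_card this)]

variable [LinearOrder α] {x y : ι → α} (hx : Antitone x) (hy : Antitone y)
include hx hy

lemma card_filter_apply_min_of_monotone {p : α → Prop} [DecidablePred p] (hp : Monotone p) :
    #{i | p (min (x i) (y i))} = min #{i | p (x i)} #{i | p (y i)} := by
  have hmin (a b : α) : p (min a b) ↔ p a ∧ p b := by
    rcases le_total a b with hab | hba
    · rw [min_eq_left hab]; exact ⟨fun ha => ⟨ha, hp hab ha⟩, And.left⟩
    · rw [min_eq_right hba]; exact ⟨fun hb => ⟨hp hba hb, hb⟩, And.right⟩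
  simp only [hmin]
  exact card_filter_and_of_antitone (hp.comp_antitone hx) (hp.comp_antitone hy)

lemma card_filter_apply_min_of_antitone {p : α → Prop} [DecidablePred p] (hp : Antitone p) :
    #{i | p (min (x i) (y i))} = max #{i | p (x i)} #{i | p (y i)} := by
  have hnot := card_filter_apply_min_of_monotone hx hy (p := fun a => ¬ p a)
    fun _ _ hab hna ha => hna (hp hab ha)
  have hcompl (v : ι → α) : #{i | p (v i)} + #{i | ¬ p (v i)} = Fintype.card ι :=
    card_filter_add_card_filter_not _
  have := hcompl x
  have := hcompl y
  have := hcompl fun i => min (x i) (y i)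
  omega

end CardFilter

section Abs

variable {ι : Type*} [Fintype ι] {p : ℝ → Prop}

lemma not_apply_neg_of_monotone (hp : Monotone p) (hp0 : ¬ p 0) {a : ℝ} (ha : p a) :
    ¬ p (-a) := fun ha' => hp0 <| by
  rcases le_total a 0 with h | h
  · exact hp h ha
  · exact hp (neg_nonpos.2 h) ha'

variable [DecidablePred p]

lemma card_filter_abs_add_card_filter_not_neg (hp : Monotone p) (hp0 : ¬ p 0) (v : ι → ℝ) :
    #{i | p |v i|} + #{i | ¬ p (-v i)} = #{i | p (v i)} + Fintype.card ι := by
  classical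
  have habs (a : ℝ) : p |a| ↔ p a ∨ p (-a) := by
    rcases le_total 0 a with ha | ha
    · rw [abs_of_nonneg ha]; exact ⟨Or.inl, (·.elim id fun h => hp (by linarith) h)⟩
    · rw [abs_of_nonpos ha]; exact ⟨Or.inr, (·.elim (fun h => hp (by linarith) h) id)⟩
  have hdisj : Disjoint (univ.filter fun i => p (v i)) (univ.filter fun i => p (-v i)) :=
    disjoint_filter.2 fun _ _ => not_apply_neg_of_monotone hp hp0
  rw [filter_congr fun i _ => habs (v i), filter_or, card_union_of_disjoint hdisj, add_assoc,
    card_filter_add_card_filter_not, card_univ]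

variable [LinearOrder ι] {x y : ι → ℝ}

lemma card_filter_abs_min (hx : Antitone x) (hy : Antitone y)
    (h : ∀ (p : ℝ → Prop) [DecidablePred p], Monotone p → #{i | p |x i|} = #{i | p |y i|})
    (hp : Monotone p) : #{i | p |min (x i) (y i)|} = #{i | p |x i|} := by
  by_cases hp0 : p 0
  · have hall (v : ι → ℝ) : #{i | p |v i|} = Fintype.card ι := by
      rw [filter_true_of_mem fun i _ => hp (abs_nonneg (v i)) hp0, card_univ]
    rw [hall, hall]
  have hq : Monotone fun a => ¬ p (-a) := fun a b hab hna hb => hna (hp (neg_le_neg hab) hb)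
  have hpq (v : ι → ℝ) : #{i | p (v i)} ≤ #{i | ¬ p (-v i)} :=
    card_le_card <| monotone_filter_right _ fun _ _ => not_apply_neg_of_monotone hp hp0
  have hq_le (v : ι → ℝ) : #{i | ¬ p (-v i)} ≤ Fintype.card ι :=
    card_univ (α := ι) ▸ card_filter_le _ _
  have hmin_p := card_filter_apply_min_of_monotone hx hy hp
  have hmin_q := card_filter_apply_min_of_monotone hx hy hq
  have := card_filter_abs_add_card_filter_not_neg hp hp0 x
  have := card_filter_abs_add_card_filter_not_neg hp hp0 y
  have := card_filter_abs_add_card_filter_not_neg hp hp0 fun i => min (x i) (y i)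
  have := h p hp
  have := hpq x
  have := hpq y
  have := hq_le x
  have := hq_le y
  -- with `A = #{p x}`, `B = #{¬ p (-x)}` and `A'`, `B'` likewise for `y`: `A ≤ B`, `A' ≤ B'` and
  -- `A - B = A' - B'`, so whichever of `x`, `y` realises `min A A'` also realises `min B B'`
  omega

end Abs

lemma prod_eq_neg_one_pow_card_mul_prod_abs {ι R : Type*} [Fintype ι] [CommRing R] [LinearOrder R]
    [IsStrictOrderedRing R] (v : ι → R) :
    ∏ i, v i = (-1) ^ #{i | v i < 0} * ∏ i, |v i| := by
  calc ∏ i, v i = ∏ i, (if v i < 0 then -1 else 1) * |v i| := by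
        refine prod_congr rfl fun i _ => ?_
        split_ifs with h
        · rw [abs_of_neg h, neg_one_mul, neg_neg]
        · rw [abs_of_nonneg (not_lt.1 h), one_mul]
    _ = (-1) ^ #{i | v i < 0} * ∏ i, |v i| := by
        rw [prod_mul_distrib, prod_ite, prod_const, prod_const_one, mul_one]

section EvenSignedPerm

variable {r : ℕ} {x y : Fin r → ℝ}

theorem isEvenSignedPermOf_iff :
    IsEvenSignedPermOf x y ↔
      univ.val.map (|x ·|) = univ.val.map (|y ·|) ∧ ∏ i, y i = ∏ i, x i := by
  constructor
  · rintro ⟨σ, ε, hε, hprod, hyx⟩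
    have habs (i : Fin r) : |y i| = |x (σ i)| := by
      rcases hε i with h | h <;> simp [hyx i, h]
    refine ⟨?_, ?_⟩
    · rw [funext habs]
      nth_rw 1 [← Multiset.map_univ_val_equiv σ]
      rw [Multiset.map_map]
      rfl
    · rw [prod_congr rfl fun i _ => hyx i, prod_mul_distrib, hprod, one_mul,
        Equiv.prod_comp σ x]
  · rintro ⟨hM, hprod⟩
    obtain ⟨σ, hσ⟩ := exists_perm_apply_eq_of_map_univ_eq hM.symm
    set e : Fin r → ℝ := fun i => if y i = x (σ i) then 1 else -1
    have he (i : Fin r) : e i = 1 ∨ e i = -1 := by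
      by_cases h : y i = x (σ i) <;> simp [e, h]
    have hye (i : Fin r) : y i = e i * x (σ i) := by
      by_cases h : y i = x (σ i)
      · simp [e, h]
      · simp only [e, if_neg h, neg_one_mul]
        exact (abs_eq_abs.1 (hσ i)).resolve_left h
    have hprod_e : ∏ i, y i = (∏ i, e i) * ∏ i, x i := by
      rw [prod_congr rfl fun i _ => hye i, prod_mul_distrib, Equiv.prod_comp σ x]
    by_cases he1 : ∏ i, e i = 1
    · exact ⟨σ, e, he, he1, hye⟩
    have he_neg : ∏ i, e i = -1 := by
      have : |∏ i, e i| = 1 := by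
        rw [abs_prod]
        exact prod_eq_one fun i _ => by rcases he i with h | h <;> simp [h]
      exact ((abs_eq zero_le_one).1 this).resolve_left he1
    have hx0 : ∏ i, x i = 0 := by
      rw [hprod_e, he_neg] at hprod
      linarith
    obtain ⟨j, -, hj⟩ := prod_eq_zero_iff.1 hx0
    -- the sign at the zero coordinate `x j` is free, so flipping it fixes the parity
    refine ⟨σ, fun i => e i * if i = σ.symm j then -1 else 1, fun i => ?_, ?_, fun i => ?_⟩
    · dsimp only
      split_ifs <;> rcases he i with h | h <;> simp [h]
    · rw [prod_mul_distrib, prod_ite_eq', if_pos (mem_univ _), he_neg, neg_one_mul, neg_neg]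
    · dsimp only
      split_ifs with hi
      · rw [hye i, hi, Equiv.apply_symm_apply, hj, mul_zero, mul_zero]
      · rw [mul_one, hye i]

theorem IsEvenSignedPermOf.min_of_antitone (hx : Antitone x) (hy : Antitone y)
    (h : IsEvenSignedPermOf x y) : IsEvenSignedPermOf x fun i => min (x i) (y i) := by
  obtain ⟨hM, hprod⟩ := isEvenSignedPermOf_iff.1 h
  have hMz : univ.val.map (|x ·|) = univ.val.map fun i => |min (x i) (y i)| :=
    map_univ_val_eq_iff_card_filter_eq.2 fun _ _ hp =>
      (card_filter_abs_min hx hy (map_univ_val_eq_iff_card_filter_eq.1 hM) hp).symm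
  have hprod_abs {v w : Fin r → ℝ} (h : univ.val.map (|v ·|) = univ.val.map (|w ·|)) :
      ∏ i, |v i| = ∏ i, |w i| := by
    rw [prod_eq_multiset_prod, prod_eq_multiset_prod, h]
  have hneg := card_filter_apply_min_of_antitone hx hy (p := (· < (0 : ℝ)))
    fun _ _ hab hb => hab.trans_lt hb
  refine isEvenSignedPermOf_iff.2 ⟨hMz, ?_⟩
  rw [prod_eq_neg_one_pow_card_mul_prod_abs, hneg, ← hprod_abs hMz]
  rcases max_choice #{i | x i < 0} #{i | y i < 0} with hmax | hmax
  · rw [hmax, ← prod_eq_neg_one_pow_card_mul_prod_abs]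
  · rw [hmax, hprod_abs hM, ← prod_eq_neg_one_pow_card_mul_prod_abs, hprod]

end EvenSignedPerm

theorem stmt6_general (r : ℕ) (δ : ℤ) (lam mu : Fin r → ℝ)
    (hlam : Antitone lam) (hmu : Antitone mu)
    (h : IsEvenSignedPermOf (fun i => lam i + (-(δ : ℝ)/2 - (i : ℕ)))
          (fun i => mu i + (-(δ : ℝ)/2 - (i : ℕ)))) :
    IsEvenSignedPermOf (fun i => lam i + (-(δ : ℝ)/2 - (i : ℕ)))
      (fun i => min (lam i) (mu i) + (-(δ : ℝ)/2 - (i : ℕ))) := by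
  have hρ : Antitone fun i : Fin r => -(δ : ℝ)/2 - (i : ℕ) := fun i j hij => by
    have : ((i : ℕ) : ℝ) ≤ (j : ℕ) := by exact_mod_cast hij
    linarith
  simpa only [min_add_add_right] using h.min_of_antitone (hlam.add hρ) (hmu.add hρ)

/-- Let `δ ∈ ℤ` and `ρ̂ = (−δ/2, −δ/2−1, …, −δ/2−(r−1))`.  If
`λ, μ ∈ ℝ^r` are weakly decreasing and conjugate under the star action of
`W(D_r)` (i.e. `μ + ρ̂ = w(λ + ρ̂)` for an even signed permutation `w`), then
`λ` and the pointwise minimum `λ ∩ μ` are conjugate under the star action of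
`W(D_r)`. -/
theorem stmt6 (r : ℕ) (hr : 1 ≤ r) (δ : ℤ) (lam mu : Fin r → ℝ)
    (hlam : Antitone lam) (hmu : Antitone mu)
    (h : IsEvenSignedPermOf (fun i => lam i + (-(δ : ℝ)/2 - (i : ℕ)))
          (fun i => mu i + (-(δ : ℝ)/2 - (i : ℕ)))) :
    IsEvenSignedPermOf (fun i => lam i + (-(δ : ℝ)/2 - (i : ℕ)))
      (fun i => min (lam i) (mu i) + (-(δ : ℝ)/2 - (i : ℕ))) :=
  stmt6_general r δ lam mu hlam hmu h
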